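/- arXiv:math/0404151 — 2 statements merged into one kernel-verified Lean document; each statement's English description precedes it below -/
import Mathlib

section
/- Compatibility criterion in Q = Q_{g,C}: suppose p₁ = (w₁,s₁) and p₂ = (w₂,s₂) are conditions in Q and γ < α < ω₁ are such that (a) w₁ ⊆ α and p₁↾γ is compatible with p₂; (b) w₂ ∩ α ⊆ γ, s₂ ∩ (α+1) ⊆ γ, and p₂↾α = p₂↾γ is compatible with p₁. Let A = ⋂{ a_i : i ∈ w₁ \ γ } and B = ⋃{ b_j : j ∈ w₂ \ γ }, and suppose there is n ∈ A \ B such that n > |{m : c_δ(m) < α}| for every δ ∈ s₂ \ α. Then p₁ and p₂ are compatible in Q (indeed p₁ ∪ p₂ = (w₁∪w₂, s₁∪s₂) is a common extension). -/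
open Set

/-- The first uncountable ordinal. -/
noncomputable def omega1 : Ordinal := (Cardinal.aleph 1).ord

/-- `a ⊆* b` : almost inclusion of subsets of `ω`. -/
def AlSub (a b : Set ℕ) : Prop := (a \ b).Finite

/-- The excess number `X(a,b)` : the least `k` such that `a \ b ⊆ {0,…,k-1}`. -/
noncomputable def excess (a b : Set ℕ) : ℕ := sInf {k | ∀ m ∈ a \ b, m < k}

/-- `D` is a club subset of `ω₁`. -/
def IsClub' (D : Set Ordinal) : Prop :=
  D ⊆ Iio omega1 ∧
  (∀ s ⊆ D, s.Nonempty → sSup s < omega1 → sSup s ∈ D) ∧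
  (∀ α < omega1, ∃ δ ∈ D, α < δ)

/-- `S` is a stationary subset of `ω₁`. -/
def IsStationary' (S : Set Ordinal) : Prop :=
  S ⊆ Iio omega1 ∧ ∀ D, IsClub' D → (S ∩ D).Nonempty

/-- A pre-gap indexed by all of `ω₁`. -/
def IsPregap (a b : Ordinal → Set ℕ) : Prop :=
  (∀ i < omega1, (a i).Infinite) ∧ (∀ j < omega1, (b j).Infinite) ∧
  (∀ i₀ i₁ : Ordinal, i₀ < i₁ → i₁ < omega1 → AlSub (a i₀) (a i₁)) ∧
  (∀ i < omega1, ∀ j < omega1, AlSub (a i) (b j)) ∧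
  (∀ j₀ j₁ : Ordinal, j₀ < j₁ → j₁ < omega1 → AlSub (b j₁) (b j₀))

/-- `x` is an interpolation of the pre-gap. -/
def IsInterpolation (a b : Ordinal → Set ℕ) (x : Set ℕ) : Prop :=
  (∀ i < omega1, AlSub (a i) x) ∧ ∀ j < omega1, AlSub x (b j)

/-- `C` is a ladder system over `S`: for each `δ ∈ S`, `c_δ` is a strictly
increasing `ω`-sequence of ordinals below `δ` cofinal in `δ`. -/
def IsLadder (S : Set Ordinal) (C : Ordinal → ℕ → Ordinal) : Prop :=
  ∀ δ ∈ S, StrictMono (C δ) ∧ (∀ n, C δ n < δ) ∧ ∀ β < δ, ∃ n, β ≤ C δ n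

/-- A condition in the poset `Q = Q_{g,C}` : a pair `(w,s)` where `w` is a
finite subset of `ω₁` and `s` is a finite subset of `S`. -/
structure QCond (S : Set Ordinal) where
  w : Set Ordinal
  s : Set Ordinal
  w_fin : w.Finite
  s_fin : s.Finite
  w_sub : ∀ i ∈ w, i < omega1
  s_sub : s ⊆ S

/-- The order on `Q_{g,C}` : `(w,s) ≤ (w',s')` iff `w ⊆ w'`, `s ⊆ s'`, and for
every `δ ∈ s` and `i ∈ w` with `δ ≤ i` and every `j ∈ (w' \ w) ∩ δ`,
`X(a_j, b_i) > |{n : c_δ(n) < j}|`. -/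
def QLe {S : Set Ordinal} (a b : Ordinal → Set ℕ) (C : Ordinal → ℕ → Ordinal)
    (p q : QCond S) : Prop :=
  p.w ⊆ q.w ∧ p.s ⊆ q.s ∧
  ∀ δ ∈ p.s, ∀ i ∈ p.w, δ ≤ i →
    ∀ j ∈ q.w, j ∉ p.w → j < δ →
      Nat.card {n : ℕ | C δ n < j} < excess (a j) (b i)

/-- Compatibility in `Q_{g,C}` : existence of a common extension. -/
def QCompatible {S : Set Ordinal} (a b : Ordinal → Set ℕ)
    (C : Ordinal → ℕ → Ordinal) (p q : QCond S) : Prop :=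
  ∃ r : QCond S, QLe a b C p r ∧ QLe a b C q r

/-- The restriction `p↾β = (w ∩ β, s ∩ β)` of a condition of `Q`. -/
def QCond.restrict {S : Set Ordinal} (p : QCond S) (β : Ordinal) : QCond S where
  w := p.w ∩ Iio β
  s := p.s ∩ Iio β
  w_fin := p.w_fin.inter_of_left _
  s_fin := p.s_fin.inter_of_left _
  w_sub := fun i hi => p.w_sub i hi.1
  s_sub := fun i hi => p.s_sub hi.1

/-- The union `p ∪ q = (w ∪ v, s ∪ r)` of two conditions of `Q`. -/
def QCond.union {S : Set Ordinal} (p q : QCond S) : QCond S where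
  w := p.w ∪ q.w
  s := p.s ∪ q.s
  w_fin := p.w_fin.union q.w_fin
  s_fin := p.s_fin.union q.s_fin
  w_sub := fun i hi => hi.elim (p.w_sub i) (q.w_sub i)
  s_sub := union_subset p.s_sub q.s_sub


lemma lt_excess {a b : Set ℕ} (h : (a \ b).Finite) {n : ℕ} (hn : n ∈ a \ b) :
    n < excess a b := by
  have hne : {k | ∀ m ∈ a \ b, m < k}.Nonempty := by
    obtain ⟨k, hk⟩ := h.bddAbove
    exact ⟨k + 1, fun m hm => Nat.lt_succ_of_le (hk hm)⟩
  exact Nat.sInf_mem hne n hn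

/-- Compatibility criterion in `Q = Q_{g,C}` (Lemma 3.2): under hypotheses
(a), (b) on `γ < α < ω₁` and the existence of `n ∈ A \ B` large enough,
`p₁ ∪ p₂` is a common extension of `p₁` and `p₂`. -/
theorem Q_compatibility_criterion
    (S : Set Ordinal) (a b : Ordinal → Set ℕ) (C : Ordinal → ℕ → Ordinal)
    (hS : IsStationary' S) (hSlim : ∀ δ ∈ S, Order.IsSuccLimit δ)
    (hC : IsLadder S C) (hg : IsPregap a b)
    (p₁ p₂ : QCond S) (γ α : Ordinal) (hγα : γ < α) (hα : α < omega1)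
    -- (a): w₁ ⊆ α and p₁↾γ is compatible with p₂
    (hw₁ : ∀ i ∈ p₁.w, i < α)
    (ha : QCompatible a b C (p₁.restrict γ) p₂)
    -- (b): w₂ ∩ α ⊆ γ, s₂ ∩ (α+1) ⊆ γ, and p₂↾α (= p₂↾γ) is compatible with p₁
    (hw₂ : ∀ i ∈ p₂.w, i < α → i < γ)
    (hs₂ : ∀ δ ∈ p₂.s, δ ≤ α → δ < γ)
    (hb : QCompatible a b C (p₂.restrict α) p₁)
    -- `n ∈ A \ B` with `n > |c_δ ∩ α|` for every `δ ∈ s₂ \ α`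
    (n : ℕ)
    (hnA : ∀ i ∈ p₁.w, γ ≤ i → n ∈ a i)
    (hnB : ∀ j ∈ p₂.w, γ ≤ j → n ∉ b j)
    (hn : ∀ δ ∈ p₂.s, α ≤ δ → Nat.card {m : ℕ | C δ m < α} < n) :
    QLe a b C p₁ (p₁.union p₂) ∧ QLe a b C p₂ (p₁.union p₂) := by
  obtain ⟨r₁, hr₁a, hr₁b⟩ := ha
  obtain ⟨r₂, hr₂a, hr₂b⟩ := hb
  constructor
  · refine ⟨subset_union_left, subset_union_left, ?_⟩
    intro δ hδ i hi hδi j hj hj1 hjδ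
    have hjw₂ : j ∈ p₂.w := hj.resolve_left hj1
    have hjα : j < α := lt_trans hjδ (lt_of_le_of_lt hδi (hw₁ i hi))
    exact hr₂b.2.2 δ hδ i hi hδi j (hr₂a.1 ⟨hjw₂, hjα⟩) hj1 hjδ
  · refine ⟨subset_union_right, subset_union_right, ?_⟩
    intro δ hδ i hi hδi j hj hj2 hjδ
    have hjw₁ : j ∈ p₁.w := hj.resolve_right hj2
    by_cases hjγ : j < γ
    · exact hr₁b.2.2 δ hδ i hi hδi j (hr₁a.1 ⟨hjw₁, hjγ⟩) hj2 hjδ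
    · push_neg at hjγ
      have hαδ : α < δ := by
        by_contra h
        push_neg at h
        exact absurd (hs₂ δ hδ h) (not_lt.mpr (le_trans hjγ hjδ.le))
      have hn' := hn δ hδ hαδ.le
      have hjα : j < α := hw₁ j hjw₁
      have hfin : (a j \ b i).Finite :=
        hg.2.2.2.1 j (p₁.w_sub j hjw₁) i (p₂.w_sub i hi)
      have hγi : γ ≤ i := le_of_lt (lt_of_lt_of_le (hγα.trans hαδ) hδi)
      have h1 : n < excess (a j) (b i) :=
        lt_excess hfin ⟨hnA j hjw₁ hjγ, hnB i hi hγi⟩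
      have hδS : δ ∈ S := p₂.s_sub hδ
      obtain ⟨hsm, -, hcof⟩ := hC δ hδS
      obtain ⟨m₀, hm₀⟩ := hcof α hαδ
      have hfinα : {m : ℕ | C δ m < α}.Finite := by
        refine (Set.finite_Iio m₀).subset fun m hm => ?_
        exact hsm.lt_iff_lt.mp (lt_of_lt_of_le hm hm₀)
      have hmono : Nat.card {m : ℕ | C δ m < j} ≤ Nat.card {m : ℕ | C δ m < α} :=
        Nat.card_mono hfinα (fun m hm => lt_trans hm hjα)
      omega
end

section
/- Suppose S ⊆ ω₁ is a stationary set of limit ordinals whose complement ω₁ \ S is also stationary, C is a ladder system over S, and g is a gap (a pre-gap with no interpolation). Then the poset Q = Q_{g,C} satisfies the countable chain condition: every set of pairwise incompatible conditions in Q is countable. -/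
open Set

/-- `D` is a club subset of `ω₁`. -/
def IsClubOmega1 (D : Set Ordinal) : Prop :=
  D ⊆ Iio omega1 ∧
  (∀ s ⊆ D, s.Nonempty → sSup s < omega1 → sSup s ∈ D) ∧
  (∀ α < omega1, ∃ δ ∈ D, α < δ)

/-- `S` is a stationary subset of `ω₁`. -/
def IsStationaryOmega1 (S : Set Ordinal) : Prop :=
  S ⊆ Iio omega1 ∧ ∀ D, IsClubOmega1 D → (S ∩ D).Nonempty

/-! ### Auxiliary lemmas -/

universe u

lemma lt_omega1_iff {β : Ordinal.{u}} : β < omega1 ↔ β.card ≤ Cardinal.aleph0 := by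
  rw [omega1, Cardinal.lt_ord, ← Cardinal.succ_aleph0, Order.lt_succ_iff]

lemma omega1_pos : 0 < omega1.{u} := by
  rw [lt_omega1_iff]; simp

lemma succ_lt_omega1 {β : Ordinal.{u}} (h : β < omega1) : β + 1 < omega1 := by
  rw [lt_omega1_iff] at h ⊢
  rw [Ordinal.card_add, Ordinal.card_one]
  exact (Cardinal.add_le_aleph0.mpr ⟨h, Cardinal.one_le_aleph0⟩)

lemma countable_Iio_omega1 {β : Ordinal.{u}} (h : β < omega1) : (Set.Iio β).Countable := by
  rw [Cardinal.countable_iff_lt_aleph_one, Ordinal.mk_Iio_ordinal,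
    ← Cardinal.succ_aleph0, Order.lt_succ_iff, ← Cardinal.lift_aleph0.{u+1, u}]
  exact Cardinal.lift_le.mpr (lt_omega1_iff.mp h)

lemma countable_Iic_omega1 {β : Ordinal.{u}} (h : β < omega1) : (Set.Iic β).Countable :=
  (countable_Iio_omega1 (succ_lt_omega1 h)).mono
    (fun _ hx => lt_of_le_of_lt hx (lt_add_one β))

lemma exists_bound_nat (f : ℕ → Ordinal.{u}) (h : ∀ n, f n < omega1) :
    ∃ β, β < omega1 ∧ ∀ n, f n ≤ β := by
  refine ⟨iSup f, ?_, fun n => Ordinal.le_iSup f n⟩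
  rw [omega1]
  apply Cardinal.iSup_lt_ord_lift_of_isRegular Cardinal.isRegular_aleph_one
    (by rw [Cardinal.mk_nat, Cardinal.lift_aleph0]; exact Cardinal.aleph0_lt_aleph_one)
  intro n
  have := h n
  rwa [omega1] at this

lemma exists_bound_countable {s : Set Ordinal.{u}} (hs : s.Countable)
    (h : ∀ x ∈ s, x < omega1) : ∃ β, β < omega1 ∧ ∀ x ∈ s, x ≤ β := by
  rcases s.eq_empty_or_nonempty with rfl | hne
  · exact ⟨0, omega1_pos, by simp⟩
  · obtain ⟨f, rfl⟩ := hs.exists_eq_range hne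
    obtain ⟨β, hβ, hb⟩ := exists_bound_nat f (fun n => h _ (mem_range_self n))
    exact ⟨β, hβ, by rintro x ⟨n, rfl⟩; exact hb n⟩

lemma excess_spec {a b : Set ℕ} (h : (a \ b).Finite) : ∀ m ∈ a \ b, m < excess a b := by
  have hne : {k | ∀ m ∈ a \ b, m < k}.Nonempty := by
    obtain ⟨B, hB⟩ := h.bddAbove
    exact ⟨B + 1, fun m hm => Nat.lt_succ_of_le (hB hm)⟩
  exact Nat.sInf_mem hne

lemma excess_diff_subset {a b : Set ℕ} (h : (a \ b).Finite) {K : ℕ}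
    (hK : excess a b ≤ K) : ∀ m ∈ a, K ≤ m → m ∈ b := by
  intro m hm hKm
  by_contra hmb
  exact absurd ((excess_spec h m ⟨hm, hmb⟩).trans_le hK) (not_lt.mpr hKm)

lemma ladder_count_finite {c : ℕ → Ordinal.{u}} {δ β : Ordinal.{u}}
    (hmono : StrictMono c) (hcof : ∀ β' < δ, ∃ n, β' ≤ c n) (hβ : β < δ) :
    {n : ℕ | c n < β}.Finite := by
  obtain ⟨n₀, hn₀⟩ := hcof β hβ
  apply (Set.finite_Iio n₀).subset
  intro n hn
  by_contra hnn
  exact absurd (hmono.le_iff_le.mpr (not_lt.mp hnn)) (not_le.mpr (lt_of_lt_of_le hn hn₀))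

lemma ladder_count_mono {c : ℕ → Ordinal.{u}} {δ β j : Ordinal.{u}}
    (hmono : StrictMono c) (hcof : ∀ β' < δ, ∃ n, β' ≤ c n) (hβ : β < δ) (hj : j ≤ β) :
    Nat.card {n : ℕ | c n < j} ≤ Nat.card {n : ℕ | c n < β} := by
  apply Nat.card_mono (ladder_count_finite hmono hcof hβ)
  exact fun n hn => lt_of_lt_of_le hn hj

lemma QCond.ext'' {S : Set Ordinal.{u}} {p q : QCond S}
    (hw : p.w = q.w) (hs : p.s = q.s) : p = q := by
  cases p; cases q; simp_all

lemma countable_bounded_supp (S : Set Ordinal.{u}) {β : Ordinal.{u}} (hβ : β < omega1) :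
    {p : QCond S | p.w ∪ p.s ⊆ Set.Iic β}.Countable := by
  have hT : {t : Set Ordinal.{u} | t.Finite ∧ t ⊆ Set.Iic β}.Countable :=
    Set.countable_setOf_finite_subset (countable_Iic_omega1 hβ)
  have hinj : Function.Injective (fun p : QCond S => (p.w, p.s)) := by
    intro p q h
    exact QCond.ext'' (congrArg Prod.fst h) (congrArg Prod.snd h)
  apply Set.Countable.mono ?_ ((hT.prod hT).preimage hinj)
  intro p hp
  simp only [Set.mem_preimage, Set.mem_prod]
  exact ⟨⟨p.w_fin, fun x hx => hp (Set.mem_union_left _ hx)⟩,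
    ⟨p.s_fin, fun x hx => hp (Set.mem_union_right _ hx)⟩⟩

/-- If `S` is a stationary set of limit ordinals with stationary complement,
`C` is a ladder system over `S`, and `g` is a gap, then `Q = Q_{g,C}`
satisfies the countable chain condition. -/
theorem Q_ccc
    (S : Set Ordinal) (a b : Ordinal → Set ℕ) (C : Ordinal → ℕ → Ordinal)
    (hS : IsStationaryOmega1 S) (hSlim : ∀ δ ∈ S, Order.IsSuccLimit δ)
    (hScostat : IsStationaryOmega1 (Iio omega1 \ S))
    (hC : IsLadder S C) (hg : IsPregap a b)
    (hgap : ¬ ∃ x : Set ℕ, IsInterpolation a b x) :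
    ∀ A : Set (QCond S), (A.Pairwise fun p q => ¬ QCompatible a b C p q) →
      A.Countable := by
  intro A hanti
  by_contra hA
  -- the support of a condition
  set supp : QCond S → Set Ordinal := fun p => p.w ∪ p.s with hsupp_def
  have hsuppfin : ∀ p : QCond S, (supp p).Finite := fun p => p.w_fin.union p.s_fin
  have hsupplt : ∀ p : QCond S, ∀ x ∈ supp p, x < omega1 := by
    intro p x hx
    rcases hx with h | h
    · exact p.w_sub x h
    · exact hS.1 (p.s_sub h)
  -- Step B : trace stabilization
  have hTmain : ∃ β₀, β₀ < omega1 ∧ ∃ Fw Fs : Set Ordinal,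
      ∀ ρ, β₀ ≤ ρ → ρ < omega1 → ∃ p, p ∈ A ∧
        p.w ∩ Iic β₀ = Fw ∧ p.s ∩ Iic β₀ = Fs ∧
        supp p ∩ Ioc β₀ ρ = ∅ ∧ (supp p ∩ Ioi ρ).Nonempty := by
    by_contra hcon
    push_neg at hcon
    -- a uniform "step" bound at every level
    have hstep : ∀ β, β < omega1 → ∃ ρ, β ≤ ρ ∧ ρ < omega1 ∧
        ∀ p, p ∈ A → supp p ∩ Ioc β ρ = ∅ → supp p ∩ Ioi ρ = ∅ := by
      intro β hβ
      have h1 : ∀ F : Set Ordinal × Set Ordinal, ∃ ρ, β ≤ ρ ∧ ρ < omega1 ∧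
          ∀ p, p ∈ A → p.w ∩ Iic β = F.1 → p.s ∩ Iic β = F.2 →
            supp p ∩ Ioc β ρ = ∅ → supp p ∩ Ioi ρ = ∅ := by
        intro F
        obtain ⟨ρ, h1, h2, h3⟩ := hcon β hβ F.1 F.2
        exact ⟨ρ, h1, h2, fun p hp hw hs' hioc => h3 p hp hw hs' hioc⟩
      choose R hR1 hR2 hR3 using h1
      have hTset : {t : Set Ordinal | t.Finite ∧ t ⊆ Set.Iic β}.Countable :=
        Set.countable_setOf_finite_subset (countable_Iic_omega1 hβ)
      obtain ⟨ρ₁, hρ₁Ω, hρ₁b⟩ := exists_bound_countable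
        (s := R '' ({t | t.Finite ∧ t ⊆ Set.Iic β} ×ˢ {t | t.Finite ∧ t ⊆ Set.Iic β}))
        ((hTset.prod hTset).image R)
        (by rintro x ⟨F, _, rfl⟩; exact hR2 F)
      refine ⟨max β ρ₁, le_max_left _ _, max_lt hβ hρ₁Ω, ?_⟩
      intro p hp hioc
      set F : Set Ordinal × Set Ordinal := (p.w ∩ Iic β, p.s ∩ Iic β) with hF
      have hFmem : F ∈ ({t | t.Finite ∧ t ⊆ Set.Iic β} ×ˢ
          {t | t.Finite ∧ t ⊆ Set.Iic β} : Set (Set Ordinal × Set Ordinal)) := by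
        constructor
        · exact ⟨p.w_fin.inter_of_left _, inter_subset_right⟩
        · exact ⟨p.s_fin.inter_of_left _, inter_subset_right⟩
      have hRle : R F ≤ ρ₁ := hρ₁b _ ⟨F, hFmem, rfl⟩
      have hioc' : supp p ∩ Ioc β (R F) = ∅ := by
        apply Set.eq_empty_of_subset_empty
        rw [← hioc]
        exact inter_subset_inter_right _
          (Set.Ioc_subset_Ioc_right (hRle.trans (le_max_right _ _)))
      have hres := hR3 F p hp rfl rfl hioc'
      apply Set.eq_empty_of_subset_empty
      rw [← hres]
      exact inter_subset_inter_right _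
        (Set.Ioi_subset_Ioi (hRle.trans (le_max_right _ _)))
    -- iterate the step function
    have hstep' : ∀ x : {o : Ordinal // o < omega1}, ∃ y : {o : Ordinal // o < omega1},
        x.1 ≤ y.1 ∧ ∀ p, p ∈ A → supp p ∩ Ioc x.1 y.1 = ∅ → supp p ∩ Ioi y.1 = ∅ := by
      intro x
      obtain ⟨ρ, h1, h2, h3⟩ := hstep x.1 x.2
      exact ⟨⟨ρ, h2⟩, h1, h3⟩
    choose stp hstp1 hstp2 using hstep'
    set B : ℕ → {o : Ordinal // o < omega1} := fun k => stp^[k] ⟨0, omega1_pos⟩ with hB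
    have hBsucc : ∀ k, B (k + 1) = stp (B k) := fun k =>
      Function.iterate_succ_apply' stp k _
    obtain ⟨βω, hβωΩ, hβωb⟩ := exists_bound_nat (fun k => (B k).1) (fun k => (B k).2)
    have hbdd : ∀ p ∈ A, supp p ⊆ Set.Iic βω := by
      intro p hp
      by_contra hnb
      rw [Set.not_subset] at hnb
      obtain ⟨x, hxs, hxgt⟩ := hnb
      have hxgt' : βω < x := not_le.mp hxgt
      have htail : ∀ k, (supp p ∩ Ioi (B k).1).Nonempty :=
        fun k => ⟨x, hxs, lt_of_le_of_lt (hβωb k) hxgt'⟩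
      have hstepint : ∀ k, (supp p ∩ Ioc (B k).1 (B (k + 1)).1).Nonempty := by
        intro k
        by_contra hem
        rw [Set.not_nonempty_iff_eq_empty] at hem
        have hres := hstp2 (B k) p hp (by rw [← hBsucc k]; exact hem)
        rw [← hBsucc k] at hres
        exact absurd (htail (k + 1)) (by rw [hres]; exact Set.not_nonempty_empty)
      choose f hf using hstepint
      have hfmono : StrictMono f := by
        apply strictMono_nat_of_lt_succ
        intro k
        exact lt_of_le_of_lt (hf k).2.2 (hf (k + 1)).2.1
      exact (hsuppfin p).not_infinite
        (Set.infinite_of_injective_forall_mem hfmono.injective (fun k => (hf k).1))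
    exact hA ((countable_bounded_supp S hβωΩ).mono (fun p hp => hbdd p hp))
  obtain ⟨β₀, hβ₀Ω, Fw, Fs, hT⟩ := hTmain
  -- Step C : a total choice function
  have hT' : ∀ ρ : Ordinal, ∃ p : QCond S, p ∈ A ∧ (β₀ ≤ ρ → ρ < omega1 →
      (p.w ∩ Iic β₀ = Fw ∧ p.s ∩ Iic β₀ = Fs ∧
        supp p ∩ Ioc β₀ ρ = ∅ ∧ (supp p ∩ Ioi ρ).Nonempty)) := by
    intro ρ
    by_cases h : β₀ ≤ ρ ∧ ρ < omega1
    · obtain ⟨p, hp, h1, h2, h3, h4⟩ := hT ρ h.1 h.2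
      exact ⟨p, hp, fun _ _ => ⟨h1, h2, h3, h4⟩⟩
    · obtain ⟨p, hp, -⟩ := hT β₀ le_rfl hβ₀Ω
      exact ⟨p, hp, fun h1 h2 => absurd ⟨h1, h2⟩ h⟩
  choose P hPA hPp using hT'
  -- Step D : bounds on supports
  have hσex : ∀ p : QCond S, ∃ β, β < omega1 ∧ ∀ x ∈ supp p, x ≤ β := fun p =>
    exists_bound_countable (hsuppfin p).countable (hsupplt p)
  choose σ hσΩ hσub using hσex
  -- Step E : the witness lemma
  have hWIT : ∀ ρ' ρ : Ordinal, β₀ ≤ ρ' → ρ' < omega1 → β₀ ≤ ρ → ρ < omega1 →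
      σ (P ρ') ≤ ρ → ∃ δ i j : Ordinal,
        δ ∈ (P ρ).s ∧ ρ < δ ∧ i ∈ (P ρ).w ∧ δ ≤ i ∧
        j ∈ (P ρ').w ∧ β₀ < j ∧ j < δ ∧
        excess (a j) (b i) ≤ Nat.card {n : ℕ | C δ n < j} := by
    intro ρ' ρ h1 h2 h3 h4 h5
    obtain ⟨hw1, hs1, hioc1, htail1⟩ := hPp ρ' h1 h2
    obtain ⟨hw2, hs2, hioc2, htail2⟩ := hPp ρ h3 h4
    obtain ⟨y, hy_supp, hy_gt⟩ := htail2
    have hne : P ρ' ≠ P ρ := by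
      intro he
      have hyσ : y ≤ σ (P ρ') := hσub (P ρ') y (he ▸ hy_supp)
      exact absurd (hyσ.trans h5) (not_le.mpr hy_gt)
    have hncomp := hanti (hPA ρ') (hPA ρ) hne
    set e := P ρ' with he_def
    set t := P ρ with ht_def
    set r := QCond.union e t with hr_def
    have hrw : r.w = e.w ∪ t.w := rfl
    have hrs : r.s = e.s ∪ t.s := rfl
    have hQle1 : QLe a b C e r := by
      refine ⟨by rw [hrw]; exact subset_union_left, by rw [hrs]; exact subset_union_left, ?_⟩
      intro δ hδ i hi hδi j hj hjne hjδ
      exfalso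
      rw [hrw] at hj
      have hjt : j ∈ t.w := hj.resolve_left hjne
      have hjβ₀ : β₀ < j := by
        by_contra hle
        have hmem : j ∈ t.w ∩ Iic β₀ := ⟨hjt, not_lt.mp hle⟩
        rw [hw2, ← hw1] at hmem
        exact hjne hmem.1
      have hjρ : ρ < j := by
        by_contra hle
        have hmem : j ∈ supp t ∩ Ioc β₀ ρ := ⟨mem_union_left _ hjt, hjβ₀, not_lt.mp hle⟩
        rw [hioc2] at hmem
        exact hmem
      have hδσ : δ ≤ σ e := hσub e δ (mem_union_right _ hδ)
      exact absurd hjδ (not_lt.mpr (le_of_lt (lt_of_le_of_lt (hδσ.trans h5) hjρ)))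
    have hQle2 : ¬ (∀ δ ∈ t.s, ∀ i ∈ t.w, δ ≤ i →
        ∀ j ∈ r.w, j ∉ t.w → j < δ →
          Nat.card {n : ℕ | C δ n < j} < excess (a j) (b i)) := by
      intro hcl
      exact hncomp ⟨r, hQle1,
        by rw [hrw]; exact subset_union_right, by rw [hrs]; exact subset_union_right, hcl⟩
    push_neg at hQle2
    obtain ⟨δ, hδ, i, hi, hδi, j, hj, hjnt, hjδ, hcnt⟩ := hQle2
    rw [hrw] at hj
    have hje : j ∈ e.w := hj.resolve_right hjnt
    have hjβ₀ : β₀ < j := by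
      by_contra hle
      have hmem : j ∈ e.w ∩ Iic β₀ := ⟨hje, not_lt.mp hle⟩
      rw [hw1, ← hw2] at hmem
      exact hjnt hmem.1
    have hδβ₀ : β₀ < δ := lt_trans hjβ₀ hjδ
    have hδρ : ρ < δ := by
      by_contra hle
      have hmem : δ ∈ supp t ∩ Ioc β₀ ρ := ⟨mem_union_right _ hδ, hδβ₀, not_lt.mp hle⟩
      rw [hioc2] at hmem
      exact hmem
    exact ⟨δ, i, j, hδ, hδρ, hi, hδi, hje, hjβ₀, hjδ, hcnt⟩
  -- Step F : the approximating sets and stabilization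
  set wb : Ordinal → Set Ordinal := fun ρ => (P ρ).w ∩ Ioi β₀ with hwb_def
  set z : Ordinal → ℕ → Set ℕ :=
    fun ρ K => {m | K ≤ m ∧ ∀ j ∈ wb ρ, m ∈ a j} with hz_def
  set xK : ℕ → Set ℕ :=
    fun K => {m | ∃ ρ, β₀ ≤ ρ ∧ ρ < omega1 ∧ m ∈ z ρ K} with hxK_def
  have hstab : ∀ K : ℕ, ∃ lam, lam < omega1 ∧
      ∀ m ∈ xK K, ∃ ρ, β₀ ≤ ρ ∧ ρ ≤ lam ∧ m ∈ z ρ K := by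
    intro K
    have h1 : ∀ m : ℕ, ∃ ρ, β₀ ≤ ρ ∧ ρ < omega1 ∧ (m ∈ xK K → m ∈ z ρ K) := by
      intro m
      by_cases hm : m ∈ xK K
      · obtain ⟨ρ, ha1, ha2, ha3⟩ := hm
        exact ⟨ρ, ha1, ha2, fun _ => ha3⟩
      · exact ⟨β₀, le_rfl, hβ₀Ω, fun h => absurd h hm⟩
    choose g hg1 hg2 hg3 using h1
    obtain ⟨lam, hlamΩ, hlamb⟩ := exists_bound_nat g hg2
    exact ⟨lam, hlamΩ, fun m hm => ⟨g m, hg1 m, hlamb m, hg3 m hm⟩⟩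
  choose Λ hΛΩ hΛ using hstab
  obtain ⟨lam2, hlam2Ω, hlam2b⟩ := exists_bound_nat Λ hΛΩ
  -- the bound γ
  obtain ⟨γ₁, hγ₁Ω, hγ₁b⟩ := exists_bound_countable
    (s := (fun ρ => σ (P ρ)) '' (Set.Iic lam2))
    ((countable_Iic_omega1 hlam2Ω).image _)
    (by rintro x ⟨ρ, -, rfl⟩; exact hσΩ _)
  set γ := max β₀ γ₁ with hγ_def
  have hγΩ : γ < omega1 := max_lt hβ₀Ω hγ₁Ω
  have hγσ : ∀ ρ, ρ ≤ lam2 → σ (P ρ) ≤ γ :=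
    fun ρ h => (hγ₁b _ ⟨ρ, h, rfl⟩).trans (le_max_right _ _)
  -- Step G : pigeonhole on ladder counts below γ
  set cnt : Ordinal → ℕ := fun δ => Nat.card {n : ℕ | C δ n < γ} with hcnt_def
  set V : Ordinal → ℕ :=
    fun ρ => ((P ρ).s_fin.inter_of_left (Ioi β₀)).toFinset.sup cnt with hV_def
  have hVle : ∀ ρ δ, δ ∈ (P ρ).s → β₀ < δ → cnt δ ≤ V ρ := by
    intro ρ δ hδ hβδ
    apply Finset.le_sup
    rw [Set.Finite.mem_toFinset]
    exact ⟨hδ, hβδ⟩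
  have hKex : ∃ Kst : ℕ, ∀ l, l < omega1 →
      ∃ ρ, β₀ ≤ ρ ∧ ρ < omega1 ∧ l < ρ ∧ γ < ρ ∧ V ρ = Kst := by
    by_contra hcon
    push_neg at hcon
    choose L hLΩ hL using hcon
    obtain ⟨Lb, hLbΩ, hLbb⟩ := exists_bound_nat L hLΩ
    set ρd := max (max Lb γ) β₀ + 1 with hρd_def
    have hρdΩ : ρd < omega1 := succ_lt_omega1 (max_lt (max_lt hLbΩ hγΩ) hβ₀Ω)
    have h1 : β₀ ≤ ρd := le_of_lt (lt_of_le_of_lt (le_max_right _ _) (lt_add_one _))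
    have h2 : L (V ρd) < ρd :=
      lt_of_le_of_lt ((hLbb _).trans ((le_max_left _ _).trans (le_max_left _ _)))
        (lt_add_one _)
    have h3 : γ < ρd :=
      lt_of_le_of_lt ((le_max_right _ _).trans (le_max_left _ _)) (lt_add_one _)
    exact hL (V ρd) ρd h1 hρdΩ h2 h3 rfl
  obtain ⟨Kst, hKst⟩ := hKex
  -- Step H : the interpolation
  apply hgap
  refine ⟨xK Kst, ?_, ?_⟩
  · -- a_l ⊆* x
    intro l hl
    set ρ := max l β₀ + 1 with hρ_def
    have hρΩ : ρ < omega1 := succ_lt_omega1 (max_lt hl hβ₀Ω)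
    have hβρ : β₀ ≤ ρ := le_of_lt (lt_of_le_of_lt (le_max_right _ _) (lt_add_one _))
    obtain ⟨hw1, hs1, hioc1, htail1⟩ := hPp ρ hβρ hρΩ
    have hsub : a l \ xK Kst ⊆ (Set.Iio Kst) ∪ ⋃ j ∈ wb ρ, (a l \ a j) := by
      intro m hm
      obtain ⟨hma, hmx⟩ := hm
      by_cases h1 : m < Kst
      · exact mem_union_left _ h1
      · apply mem_union_right
        have hmz : m ∉ z ρ Kst := fun hz => hmx ⟨ρ, hβρ, hρΩ, hz⟩
        rw [hz_def] at hmz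
        simp only [mem_setOf_eq, not_and] at hmz
        have hmz2 := hmz (not_lt.mp h1)
        push_neg at hmz2
        obtain ⟨j, hj, hja⟩ := hmz2
        exact mem_biUnion hj ⟨hma, hja⟩
    show (a l \ xK Kst).Finite
    apply Set.Finite.subset ?_ hsub
    apply Set.Finite.union (Set.finite_Iio _)
    apply Set.Finite.biUnion ((P ρ).w_fin.inter_of_left _)
    intro j hj
    have hjΩ : j < omega1 := (P ρ).w_sub j hj.1
    have hjρ : ρ < j := by
      by_contra hle
      have hmem : j ∈ supp (P ρ) ∩ Ioc β₀ ρ :=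
        ⟨mem_union_left _ hj.1, hj.2, not_lt.mp hle⟩
      rw [hioc1] at hmem
      exact hmem
    have hlj : l < j :=
      lt_trans (lt_of_le_of_lt (le_max_left _ _) (lt_add_one _)) hjρ
    exact hg.2.2.1 l j hlj hjΩ
  · -- x ⊆* b_l
    intro l hl
    obtain ⟨ρ, hβρ, hρΩ, hlρ, hγρ, hVρ⟩ := hKst l hl
    obtain ⟨hw2, hs2, hioc2, htail2⟩ := hPp ρ hβρ hρΩ
    have hsub : xK Kst \ b l ⊆ ⋃ i ∈ (P ρ).w ∩ Ioi l, (b i \ b l) := by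
      intro m hm
      obtain ⟨hmx, hmb⟩ := hm
      obtain ⟨ρ', hβρ', hρ'lam, hmz⟩ := hΛ Kst m hmx
      have hρ'lam2 : ρ' ≤ lam2 := hρ'lam.trans (hlam2b Kst)
      have hρ'Ω : ρ' < omega1 := lt_of_le_of_lt hρ'lam2 hlam2Ω
      have hσρ' : σ (P ρ') ≤ ρ := le_of_lt (lt_of_le_of_lt (hγσ ρ' hρ'lam2) hγρ)
      obtain ⟨δ, i, j, hδs, hρδ, hiw, hδi, hjw, hjβ₀, hjδ, hexc⟩ :=
        hWIT ρ' ρ hβρ' hρ'Ω hβρ hρΩ hσρ'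
      have hδS : δ ∈ S := (P ρ).s_sub hδs
      obtain ⟨hmono, hltδ, hcof⟩ := hC δ hδS
      have hγδ : γ < δ := lt_trans hγρ hρδ
      have hjγ : j ≤ γ := (hσub (P ρ') j (mem_union_left _ hjw)).trans (hγσ ρ' hρ'lam2)
      have hβ₀δ : β₀ < δ :=
        lt_trans (lt_of_le_of_lt (le_max_left β₀ γ₁) hγρ) hρδ
      have hcount : Nat.card {n : ℕ | C δ n < j} ≤ Kst := by
        calc Nat.card {n : ℕ | C δ n < j}
            ≤ Nat.card {n : ℕ | C δ n < γ} := ladder_count_mono hmono hcof hγδ hjγ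
          _ ≤ V ρ := hVle ρ δ hδs hβ₀δ
          _ = Kst := hVρ
      have hexcK : excess (a j) (b i) ≤ Kst := hexc.trans hcount
      have hjwb : j ∈ wb ρ' := ⟨hjw, hjβ₀⟩
      have hma : m ∈ a j := hmz.2 j hjwb
      have hKm : Kst ≤ m := hmz.1
      have hjΩ : j < omega1 := (P ρ').w_sub j hjw
      have hiΩ : i < omega1 := (P ρ).w_sub i hiw
      have hfin : (a j \ b i).Finite := hg.2.2.2.1 j hjΩ i hiΩ
      have hmbi : m ∈ b i := excess_diff_subset hfin hexcK m hma hKm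
      have hli : l < i := lt_of_lt_of_le (lt_trans hlρ hρδ) hδi
      exact mem_biUnion ⟨hiw, hli⟩ ⟨hmbi, hmb⟩
    show (xK Kst \ b l).Finite
    apply Set.Finite.subset ?_ hsub
    apply Set.Finite.biUnion ((P ρ).w_fin.inter_of_left _)
    intro i hi
    exact hg.2.2.2.2 l i hi.2 ((P ρ).w_sub i hi.1)
end
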